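/- Let Ω ⊆ ℝ² be open and connected and let φ ∈ C²(Ω). Then the following are equivalent: (a) Δφ = −2 on Ω and the function ½|Dφ|² + φ is constant on Ω; (b) there exist constants u, v, k ∈ ℝ such that φ(ξ,η) = −½(ξ² + η²) + uξ + vη + k for all (ξ,η) ∈ Ω. In other words, the solutions of the self-similar potential flow system with constant density are exactly the uniform-state pseudo-potentials. -/

import Mathlib

/-!
Put `ψ = φ + ½(ξ² + η²)`. Differentiating Bernoulli's law `½|Dφ|² + φ = C` gives
`(D²φ + I) Dφ = 0`, and `D²φ + I = D²ψ` is symmetric and trace-free by `Δφ = -2`, so it is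
`[[a, b], [b, -a]]` with determinant `-(a² + b²)`. Hence at every point either `D²φ = -I` or
`Dφ = 0`. On the open set where `D²φ ≠ -I` the gradient vanishes identically, so `D²φ = 0` there,
contradicting `Δφ = -2`. Thus `D²φ = -I` on all of `Ω`, and on a connected set this forces `φ` to be
a uniform state. Conversely a uniform state has `D²φ = -I` and `Dφ = (u - ξ, v - η)`.
-/

noncomputable def pdxi (f : ℝ → ℝ → ℝ) (ξ η : ℝ) : ℝ := deriv (fun s => f s η) ξ
noncomputable def pdeta (f : ℝ → ℝ → ℝ) (ξ η : ℝ) : ℝ := deriv (fun s => f ξ s) η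

open Function Set Filter Topology ContinuousLinearMap

theorem IsOpen.exists_eq_add_add_of_fderiv_fderiv_eq {E G : Type*} [NormedAddCommGroup E]
    [NormedSpace ℝ E] [NormedAddCommGroup G] [NormedSpace ℝ G] {s : Set E} {f g : E → G}
    (hs : IsOpen s) (hs' : IsPreconnected s) (hf : ContDiffOn ℝ 2 f s) (hg : ContDiffOn ℝ 2 g s)
    (h : EqOn (fderiv ℝ (fderiv ℝ f)) (fderiv ℝ (fderiv ℝ g)) s) :
    ∃ (c : E →L[ℝ] G) (k : G), EqOn f (fun x => g x + c x + k) s := by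
  have hf' : DifferentiableOn ℝ (fderiv ℝ f) s :=
    (hf.fderiv_of_isOpen hs (m := 1) le_rfl).differentiableOn one_ne_zero
  have hg' : DifferentiableOn ℝ (fderiv ℝ g) s :=
    (hg.fderiv_of_isOpen hs (m := 1) le_rfl).differentiableOn one_ne_zero
  obtain ⟨c, hc⟩ := hs.exists_eq_add_of_fderiv_eq hs' hf' hg' h
  have hg₁ : DifferentiableOn ℝ g s := hg.differentiableOn two_ne_zero
  obtain ⟨k, hk⟩ := hs.exists_eq_add_of_fderiv_eq hs' (hf.differentiableOn two_ne_zero)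
    (hg₁.add c.differentiableOn) fun x hx => by
      rw [hc hx, fderiv_add (hg₁.differentiableAt (hs.mem_nhds hx)) c.differentiableAt, c.fderiv]
  exact ⟨c, k, hk⟩

noncomputable def uniformState (u v k ξ η : ℝ) : ℝ := -(1 / 2) * (ξ ^ 2 + η ^ 2) + u * ξ + v * η + k

/-- `ℝ × ℝ` carries the sup norm, so its Euclidean inner product is spelled out by hand. -/
noncomputable def dotL : ℝ × ℝ →L[ℝ] ℝ × ℝ →L[ℝ] ℝ :=
  (fst ℝ ℝ ℝ).smulRight (fst ℝ ℝ ℝ) + (snd ℝ ℝ ℝ).smulRight (snd ℝ ℝ ℝ)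

@[simp] lemma dotL_apply (v w : ℝ × ℝ) : dotL v w = v.1 * w.1 + v.2 * w.2 := by
  simp [dotL]

lemma hasFDerivAt_uniformState (u v k : ℝ) (x : ℝ × ℝ) :
    HasFDerivAt (uncurry (uniformState u v k)) (-dotL x + (u • fst ℝ ℝ ℝ + v • snd ℝ ℝ ℝ)) x := by
  have h := (((dotL.hasFDerivAt_of_bilinear (hasFDerivAt_id x) (hasFDerivAt_id x)).const_mul
    (-(1 / 2) : ℝ)).add ((u • fst ℝ ℝ ℝ + v • snd ℝ ℝ ℝ).hasFDerivAt)).add_const k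
  have hU : uncurry (uniformState u v k) =
      fun y => -(1 / 2) * dotL y y + (u • fst ℝ ℝ ℝ + v • snd ℝ ℝ ℝ) y + k := by
    ext y
    simp only [uncurry, uniformState, dotL_apply, add_apply, smul_apply, coe_fst', coe_snd',
      smul_eq_mul]
    ring
  rw [hU]
  refine h.congr_fderiv ?_
  ext <;> simp [← two_mul]

lemma fderiv_uniformState (u v k : ℝ) :
    fderiv ℝ (uncurry (uniformState u v k)) = fun x => -dotL x + (u • fst ℝ ℝ ℝ + v • snd ℝ ℝ ℝ) :=
  funext fun x => (hasFDerivAt_uniformState u v k x).fderiv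

lemma fderiv_fderiv_uniformState (u v k : ℝ) (x : ℝ × ℝ) :
    fderiv ℝ (fderiv ℝ (uncurry (uniformState u v k))) x = -dotL := by
  rw [fderiv_uniformState]
  exact ((dotL.hasFDerivAt.neg).add_const _).fderiv

lemma contDiff_uniformState (u v k : ℝ) : ContDiff ℝ 2 (uncurry (uniformState u v k)) := by
  unfold uniformState uncurry; fun_prop

lemma IsOpen.exists_eqOn_uniformState {Ω : Set (ℝ × ℝ)} {F : ℝ × ℝ → ℝ} (hΩ : IsOpen Ω)
    (hΩ' : IsPreconnected Ω) (hF : ContDiffOn ℝ 2 F Ω)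
    (hess : ∀ x ∈ Ω, fderiv ℝ (fderiv ℝ F) x = -dotL) :
    ∃ u v k, EqOn F (uncurry (uniformState u v k)) Ω := by
  obtain ⟨c, k, hck⟩ := hΩ.exists_eq_add_add_of_fderiv_fderiv_eq hΩ' hF
    (contDiff_uniformState 0 0 0).contDiffOn fun x hx => by
      rw [hess x hx, fderiv_fderiv_uniformState]
  refine ⟨c (1, 0), c (0, 1), k, fun ⟨ξ, η⟩ hx => ?_⟩
  have hc : c (ξ, η) = ξ * c (1, 0) + η * c (0, 1) := by
    rw [← smul_eq_mul, ← smul_eq_mul, ← map_smul, ← map_smul, ← map_add]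
    simp
  rw [hck hx]
  simp only [uncurry, uniformState, hc]
  ring

section PartialDerivatives

variable {f : ℝ → ℝ → ℝ} {Ω : Set (ℝ × ℝ)} {ξ η : ℝ}

lemma pdxi_eq_fderiv (h : DifferentiableAt ℝ (uncurry f) (ξ, η)) :
    pdxi f ξ η = fderiv ℝ (uncurry f) (ξ, η) (1, 0) := by
  have := h.hasFDerivAt.comp_hasDerivAt ξ ((hasDerivAt_id' ξ).prodMk (hasDerivAt_const ξ η))
  exact this.deriv

lemma pdeta_eq_fderiv (h : DifferentiableAt ℝ (uncurry f) (ξ, η)) :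
    pdeta f ξ η = fderiv ℝ (uncurry f) (ξ, η) (0, 1) :=
  (h.hasFDerivAt.comp_hasDerivAt η ((hasDerivAt_const η ξ).prodMk (hasDerivAt_id' η))).deriv

lemma pdxi_congr {g : ℝ → ℝ → ℝ} (h : uncurry f =ᶠ[𝓝 (ξ, η)] uncurry g) :
    pdxi f ξ η = pdxi g ξ η :=
  (h.comp_tendsto ((continuous_id.prodMk continuous_const).tendsto' ξ (ξ, η) rfl)).deriv_eq

lemma pdeta_congr {g : ℝ → ℝ → ℝ} (h : uncurry f =ᶠ[𝓝 (ξ, η)] uncurry g) :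
    pdeta f ξ η = pdeta g ξ η :=
  (h.comp_tendsto ((continuous_const.prodMk continuous_id).tendsto' η (ξ, η) rfl)).deriv_eq

lemma pdxi_pdxi_eq_fderiv_fderiv (hΩ : IsOpen Ω) (hf : ContDiffOn ℝ 2 (uncurry f) Ω)
    (hx : (ξ, η) ∈ Ω) :
    pdxi (pdxi f) ξ η = fderiv ℝ (fderiv ℝ (uncurry f)) (ξ, η) (1, 0) (1, 0) := by
  have hD : DifferentiableAt ℝ (fderiv ℝ (uncurry f)) (ξ, η) :=
    ((hf.contDiffAt (hΩ.mem_nhds hx)).fderiv_right (m := 1) le_rfl).differentiableAt one_ne_zero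
  have hslice :
      uncurry (pdxi f) =ᶠ[𝓝 (ξ, η)] uncurry (curry fun y => fderiv ℝ (uncurry f) y (1, 0)) :=
    eventually_of_mem (hΩ.mem_nhds hx) fun y hy =>
      pdxi_eq_fderiv ((hf.contDiffAt (hΩ.mem_nhds hy)).differentiableAt two_ne_zero)
  rw [pdxi_congr hslice, pdxi_eq_fderiv (by simpa using hD.clm_apply (differentiableAt_const _)),
    uncurry_curry, fderiv_clm_apply hD (differentiableAt_const _)]
  simp

lemma pdeta_pdeta_eq_fderiv_fderiv (hΩ : IsOpen Ω) (hf : ContDiffOn ℝ 2 (uncurry f) Ω)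
    (hx : (ξ, η) ∈ Ω) :
    pdeta (pdeta f) ξ η = fderiv ℝ (fderiv ℝ (uncurry f)) (ξ, η) (0, 1) (0, 1) := by
  have hD : DifferentiableAt ℝ (fderiv ℝ (uncurry f)) (ξ, η) :=
    ((hf.contDiffAt (hΩ.mem_nhds hx)).fderiv_right (m := 1) le_rfl).differentiableAt one_ne_zero
  have hslice :
      uncurry (pdeta f) =ᶠ[𝓝 (ξ, η)] uncurry (curry fun y => fderiv ℝ (uncurry f) y (0, 1)) :=
    eventually_of_mem (hΩ.mem_nhds hx) fun y hy =>
      pdeta_eq_fderiv ((hf.contDiffAt (hΩ.mem_nhds hy)).differentiableAt two_ne_zero)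
  rw [pdeta_congr hslice, pdeta_eq_fderiv (by simpa using hD.clm_apply (differentiableAt_const _)),
    uncurry_curry, fderiv_clm_apply hD (differentiableAt_const _)]
  simp

end PartialDerivatives

lemma eq_zero_and_eq_zero_or_of_mul_add_mul_eq_zero {a b p q : ℝ} (h₁ : p * a + q * b = 0)
    (h₂ : p * b - q * a = 0) : (a = 0 ∧ b = 0) ∨ (p = 0 ∧ q = 0) := by
  have h : (a ^ 2 + b ^ 2) * (p ^ 2 + q ^ 2) = 0 := by
    linear_combination (p * a + q * b) * h₁ + (p * b - q * a) * h₂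
  rcases mul_eq_zero.1 h with h | h
  · exact .inl ⟨by nlinarith, by nlinarith⟩
  · exact .inr ⟨by nlinarith, by nlinarith⟩

section ConstantDensity

variable {Ω : Set (ℝ × ℝ)} {F : ℝ × ℝ → ℝ} {C : ℝ}

lemma fderiv_bernoulli_eq_zero (hΩ : IsOpen Ω) (hF : ContDiffOn ℝ 2 F Ω)
    (hbern : ∀ y ∈ Ω, 1 / 2 * (fderiv ℝ F y (1, 0) ^ 2 + fderiv ℝ F y (0, 1) ^ 2) + F y = C)
    {x : ℝ × ℝ} (hx : x ∈ Ω) (w : ℝ × ℝ) :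
    fderiv ℝ F x (1, 0) * fderiv ℝ (fderiv ℝ F) x w (1, 0) +
      fderiv ℝ F x (0, 1) * fderiv ℝ (fderiv ℝ F) x w (0, 1) + fderiv ℝ F x w = 0 := by
  have hFx := hF.contDiffAt (hΩ.mem_nhds hx)
  have hD : HasFDerivAt (fderiv ℝ F) (fderiv ℝ (fderiv ℝ F) x) x :=
    ((hFx.fderiv_right (m := 1) le_rfl).differentiableAt one_ne_zero).hasFDerivAt
  have hpartial (e : ℝ × ℝ) := (apply ℝ ℝ e : (ℝ × ℝ →L[ℝ] ℝ) →L[ℝ] ℝ).hasFDerivAt.comp x hD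
  have hB := ((((hpartial (1, 0)).pow 2).add ((hpartial (0, 1)).pow 2)).const_mul (1 / 2)).add
    (hFx.differentiableAt two_ne_zero).hasFDerivAt
  have h0 : HasFDerivAt (fun y => 1 / 2 * (fderiv ℝ F y (1, 0) ^ 2 + fderiv ℝ F y (0, 1) ^ 2) + F y)
      (0 : ℝ × ℝ →L[ℝ] ℝ) x :=
    (hasFDerivAt_const C x).congr_of_eventuallyEq (eventually_of_mem (hΩ.mem_nhds hx) hbern)
  have := congr($(hB.unique h0) w)
  simp only [Function.comp_apply, ContinuousLinearMap.comp_apply, apply_apply, add_apply,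
    smul_apply, smul_eq_mul, zero_apply, nsmul_eq_mul, Nat.cast_ofNat, Nat.add_one_sub_one, pow_one,
    smul_add] at this
  linarith

lemma fderiv_fderiv_eq_neg_dotL_or_fderiv_eq_zero (hΩ : IsOpen Ω) (hF : ContDiffOn ℝ 2 F Ω)
    (hlap : ∀ y ∈ Ω,
      fderiv ℝ (fderiv ℝ F) y (1, 0) (1, 0) + fderiv ℝ (fderiv ℝ F) y (0, 1) (0, 1) = -2)
    (hbern : ∀ y ∈ Ω, 1 / 2 * (fderiv ℝ F y (1, 0) ^ 2 + fderiv ℝ F y (0, 1) ^ 2) + F y = C)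
    {x : ℝ × ℝ} (hx : x ∈ Ω) :
    fderiv ℝ (fderiv ℝ F) x = -dotL ∨ fderiv ℝ F x = 0 := by
  have hsymm := (hF.contDiffAt (hΩ.mem_nhds hx)).isSymmSndFDerivAt (n := 2) (by simp)
  have h₁ := fderiv_bernoulli_eq_zero hΩ hF hbern hx (1, 0)
  have h₂ := fderiv_bernoulli_eq_zero hΩ hF hbern hx (0, 1)
  rw [hsymm (0, 1) (1, 0)] at h₂
  have htr := hlap x hx
  obtain ⟨ha, hb⟩ | ⟨hp, hq⟩ := eq_zero_and_eq_zero_or_of_mul_add_mul_eq_zero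
    (a := fderiv ℝ (fderiv ℝ F) x (1, 0) (1, 0) + 1) (b := fderiv ℝ (fderiv ℝ F) x (1, 0) (0, 1))
    (p := fderiv ℝ F x (1, 0)) (q := fderiv ℝ F x (0, 1))
    (by linear_combination h₁) (by linear_combination h₂ - fderiv ℝ F x (0, 1) * htr)
  · left
    ext <;> simp only [ContinuousLinearMap.comp_apply, inl_apply, inr_apply, neg_comp, neg_apply,
      dotL_apply] <;>
      linarith [hsymm (1, 0) (0, 1)]
  · right
    ext <;> simp [hp, hq]

theorem fderiv_fderiv_eq_neg_dotL (hΩ : IsOpen Ω) (hF : ContDiffOn ℝ 2 F Ω)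
    (hlap : ∀ y ∈ Ω,
      fderiv ℝ (fderiv ℝ F) y (1, 0) (1, 0) + fderiv ℝ (fderiv ℝ F) y (0, 1) (0, 1) = -2)
    (hbern : ∀ y ∈ Ω, 1 / 2 * (fderiv ℝ F y (1, 0) ^ 2 + fderiv ℝ F y (0, 1) ^ 2) + F y = C)
    {x : ℝ × ℝ} (hx : x ∈ Ω) :
    fderiv ℝ (fderiv ℝ F) x = -dotL := by
  by_contra hne
  have hcont : ContinuousOn (fderiv ℝ (fderiv ℝ F)) Ω :=
    (hF.fderiv_of_isOpen hΩ (m := 1) le_rfl).continuousOn_fderiv_of_isOpen hΩ le_rfl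
  have hU : IsOpen (Ω ∩ fderiv ℝ (fderiv ℝ F) ⁻¹' {-dotL}ᶜ) :=
    hcont.isOpen_inter_preimage hΩ isOpen_compl_singleton
  have hDF : fderiv ℝ F =ᶠ[𝓝 x] fun _ => 0 :=
    eventually_of_mem (hU.mem_nhds ⟨hx, hne⟩) fun y hy =>
      (fderiv_fderiv_eq_neg_dotL_or_fderiv_eq_zero hΩ hF hlap hbern hy.1).resolve_left hy.2
  have htr := hlap x hx
  rw [hDF.fderiv_eq, fderiv_const_apply] at htr
  norm_num at htr

end ConstantDensity

/-- For φ ∈ C²(Ω) on an open connected Ω ⊆ ℝ², the following are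
equivalent: (a) Δφ = −2 on Ω and ½|Dφ|² + φ is constant on Ω;
(b) φ(ξ,η) = −½(ξ² + η²) + uξ + vη + k on Ω for some constants u, v, k. -/
theorem constant_density_states_are_uniform
    (Ω : Set (ℝ × ℝ)) (hΩo : IsOpen Ω) (hΩc : IsConnected Ω)
    (φ : ℝ → ℝ → ℝ)
    (hφC2 : ContDiffOn ℝ 2 (fun q : ℝ × ℝ => φ q.1 q.2) Ω) :
    ((∀ ξ η : ℝ, (ξ, η) ∈ Ω →
        pdxi (pdxi φ) ξ η + pdeta (pdeta φ) ξ η = -2) ∧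
     (∃ C : ℝ, ∀ ξ η : ℝ, (ξ, η) ∈ Ω →
        (1/2) * ((pdxi φ ξ η)^2 + (pdeta φ ξ η)^2) + φ ξ η = C))
    ↔
    (∃ u v k : ℝ, ∀ ξ η : ℝ, (ξ, η) ∈ Ω →
        φ ξ η = -(1/2) * (ξ^2 + η^2) + u * ξ + v * η + k) := by
  have hF : ContDiffOn ℝ 2 (uncurry φ) Ω := hφC2
  have hdiff : ∀ x ∈ Ω, DifferentiableAt ℝ (uncurry φ) x := fun x hx =>
    (hF.contDiffAt (hΩo.mem_nhds hx)).differentiableAt two_ne_zero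
  constructor
  · rintro ⟨hlap, C, hbern⟩
    have hlap' : ∀ x ∈ Ω, fderiv ℝ (fderiv ℝ (uncurry φ)) x (1, 0) (1, 0) +
        fderiv ℝ (fderiv ℝ (uncurry φ)) x (0, 1) (0, 1) = -2 := fun ⟨ξ, η⟩ hx => by
      rw [← pdxi_pdxi_eq_fderiv_fderiv hΩo hF hx, ← pdeta_pdeta_eq_fderiv_fderiv hΩo hF hx]
      exact hlap ξ η hx
    have hbern' : ∀ x ∈ Ω, 1 / 2 * (fderiv ℝ (uncurry φ) x (1, 0) ^ 2 +
        fderiv ℝ (uncurry φ) x (0, 1) ^ 2) + uncurry φ x = C := fun ⟨ξ, η⟩ hx => by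
      rw [← pdxi_eq_fderiv (hdiff _ hx), ← pdeta_eq_fderiv (hdiff _ hx)]
      exact hbern ξ η hx
    obtain ⟨u, v, k, huvk⟩ := hΩo.exists_eqOn_uniformState hΩc.isPreconnected hF
      fun x => fderiv_fderiv_eq_neg_dotL hΩo hF hlap' hbern'
    exact ⟨u, v, k, fun ξ η hx => huvk hx⟩
  · rintro ⟨u, v, k, hφ⟩
    have hloc : ∀ x ∈ Ω, uncurry φ =ᶠ[𝓝 x] uncurry (uniformState u v k) := fun x hx =>
      eventually_of_mem (hΩo.mem_nhds hx) fun y hy => hφ y.1 y.2 hy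
    refine ⟨fun ξ η hx => ?_, ⟨1 / 2 * (u ^ 2 + v ^ 2) + k, fun ξ η hx => ?_⟩⟩
    · rw [pdxi_pdxi_eq_fderiv_fderiv hΩo hF hx, pdeta_pdeta_eq_fderiv_fderiv hΩo hF hx,
        (hloc _ hx).fderiv.fderiv_eq, fderiv_fderiv_uniformState]
      norm_num
    · rw [pdxi_eq_fderiv (hdiff _ hx), pdeta_eq_fderiv (hdiff _ hx), (hloc _ hx).fderiv_eq,
        fderiv_uniformState, hφ ξ η hx]
      simp only [add_apply, neg_apply, dotL_apply, smul_apply, coe_fst', coe_snd', smul_eq_mul]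
      ring
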